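/- arXiv:2105.01182 — 8 statements merged into one kernel-verified Lean document; each statement's English description precedes it below -/
import Mathlib

section
/- Let p ≥ 3 be an odd prime, let λ, ν ∈ ℂ with ν^p = λ − 1, and let x₁, x₂, x₃, x₄ ∈ ℂ satisfy x₁^p + x₂^p + x₃^p = 0 and λ·x₁^p + x₂^p + x₄^p = 0. Then (−x₃)^p + x₄^p + (ν·x₁)^p = 0 and λ·(−x₃)^p + x₄^p + (−ν·x₂)^p = 0. -/
/-- Let `p ≥ 3` be an odd prime, `ν^p = λ − 1`, and suppose
`x₁^p + x₂^p + x₃^p = 0` and `λ·x₁^p + x₂^p + x₄^p = 0`. Then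
`(−x₃)^p + x₄^p + (ν·x₁)^p = 0` and `λ·(−x₃)^p + x₄^p + (−ν·x₂)^p = 0`. -/
theorem stmt1 (p : ℕ) (hp : p.Prime) (hodd : Odd p) (hp3 : 3 ≤ p)
    (lam nu x1 x2 x3 x4 : ℂ) (hnu : nu ^ p = lam - 1)
    (h1 : x1 ^ p + x2 ^ p + x3 ^ p = 0)
    (h2 : lam * x1 ^ p + x2 ^ p + x4 ^ p = 0) :
    (-x3) ^ p + x4 ^ p + (nu * x1) ^ p = 0 ∧
      lam * (-x3) ^ p + x4 ^ p + (-(nu * x2)) ^ p = 0 := by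
  rw [hodd.neg_pow, hodd.neg_pow, mul_pow, mul_pow, hnu]
  exact ⟨by linear_combination h2 - h1, by linear_combination h2 - lam * h1⟩
end

section
/- Let p ≥ 3 be a prime and let H = (ℤ/p)⁴ / ⟨(1,1,1,1)⟩ with ē₁, ē₂, ē₃, ē₄ the images of the standard basis vectors, and let S₄ act on H by permuting coordinates. If K is a nontrivial subgroup of H that is invariant under both the permutation (1 2)(3 4) and the permutation (2 3 4) (equivalently, invariant under the alternating group A₄), then K contains a nonzero multiple of ē_j for some j ∈ {1,2,3,4}. -/
/-- `H = (ℤ/p)⁴ / ⟨(1,1,1,1)⟩`. -/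
abbrev Hq (p : ℕ) : Type :=
  (Fin 4 → ZMod p) ⧸ Submodule.span (ZMod p) {(fun _ => (1 : ZMod p) : Fin 4 → ZMod p)}

/-- `ē j`, the image in `H` of the `j`-th standard basis vector. -/
def eBar (p : ℕ) (j : Fin 4) : Hq p :=
  Submodule.Quotient.mk (Pi.single j (1 : ZMod p))

/-- The action of a permutation `σ ∈ S₄` on `H` by permuting coordinates, sending
`ē j` to `ē (σ j)`. -/
def permHom (p : ℕ) (σ : Equiv.Perm (Fin 4)) : Hq p →ₗ[ZMod p] Hq p :=
  Submodule.mapQ _ _ (LinearMap.funLeft (ZMod p) (ZMod p) ⇑σ⁻¹)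
    (by
      rw [Submodule.span_le]
      rintro x hx
      rw [Set.mem_singleton_iff] at hx
      subst hx
      have : LinearMap.funLeft (ZMod p) (ZMod p) ⇑σ⁻¹
          (fun _ => (1 : ZMod p)) = fun _ => (1 : ZMod p) := rfl
      exact Submodule.mem_comap.mpr (this ▸ Submodule.subset_span rfl))

/-- if `K` is a nontrivial subgroup of `H` invariant under the
permutations `(1 2)(3 4)` and `(2 3 4)` (hence under `A₄`), then `K` contains a
nonzero multiple of some `ē j`.  (Indices are 0-based: `(1 2)(3 4)` is
`(0 1)(2 3)` and `(2 3 4)` is `(1 2 3)` on `Fin 4`.) -/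
theorem stmt9 (p : ℕ) (hp : p.Prime) (hp3 : 3 ≤ p)
    (K : AddSubgroup (Hq p)) (hK : K ≠ ⊥)
    (h1 : K.map (permHom p (Equiv.swap 0 1 * Equiv.swap 2 3)).toAddMonoidHom = K)
    (h2 : K.map (permHom p (Equiv.swap 1 2 * Equiv.swap 2 3)).toAddMonoidHom = K) :
    ∃ j : Fin 4, ∃ x ∈ K, x ≠ 0 ∧ x ∈ AddSubgroup.zmultiples (eBar p j) := by
  haveI : Fact p.Prime := ⟨hp⟩
  have hσ : ∀ i, (Equiv.swap 0 1 * Equiv.swap 2 3 : Equiv.Perm (Fin 4))⁻¹ i = ![1,0,3,2] i := by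
    decide
  have hτ : ∀ i, (Equiv.swap 1 2 * Equiv.swap 2 3 : Equiv.Perm (Fin 4))⁻¹ i = ![0,3,1,2] i := by
    decide
  -- 4 ≠ 0 and 2 ≠ 0 in ZMod p
  have h4ne : (4 : ZMod p) ≠ 0 := by
    intro h
    have hd : (p : ℕ) ∣ 4 := by
      have : ((4 : ℕ) : ZMod p) = 0 := by exact_mod_cast h
      exact (ZMod.natCast_eq_zero_iff 4 p).mp this
    have hd2 : p ∣ 2 := Nat.Prime.dvd_of_dvd_pow (n := 2) hp (by simpa using hd)
    have := Nat.le_of_dvd (by norm_num) hd2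
    omega
  have h2ne : (2 : ZMod p) ≠ 0 := fun h => h4ne (by rw [show (4:ZMod p) = 2*2 by norm_num, h, mul_zero])
  -- K closed under the two permutations and scalar multiplication
  have hS : ∀ x ∈ K, permHom p (Equiv.swap 0 1 * Equiv.swap 2 3) x ∈ K := by
    intro x hx
    have := AddSubgroup.mem_map_of_mem (permHom p (Equiv.swap 0 1 * Equiv.swap 2 3)).toAddMonoidHom hx
    rwa [h1] at this
  have hT : ∀ x ∈ K, permHom p (Equiv.swap 1 2 * Equiv.swap 2 3) x ∈ K := by
    intro x hx
    have := AddSubgroup.mem_map_of_mem (permHom p (Equiv.swap 1 2 * Equiv.swap 2 3)).toAddMonoidHom hx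
    rwa [h2] at this
  have hsmul : ∀ (r : ZMod p) (x : Hq p), x ∈ K → r • x ∈ K := by
    intro r x hx
    have : r • x = r.val • x := by
      rw [← Nat.cast_smul_eq_nsmul (ZMod p), ZMod.natCast_val, ZMod.cast_id]
    rw [this]
    exact AddSubgroup.nsmul_mem K hx _
  -- a nonzero element of K
  have hex : ∃ x ∈ K, x ≠ 0 := by
    by_contra h
    push_neg at h
    exact hK ((AddSubgroup.eq_bot_iff_forall K).mpr h)
  obtain ⟨x, hxK, hx0⟩ := hex
  obtain ⟨a, rfl⟩ := Submodule.Quotient.mk_surjective _ x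
  -- key step: from mk b ∈ K we get (b0+b1-b2-b3) • V₁ ∈ K
  have key : ∀ b : Fin 4 → ZMod p, (Submodule.Quotient.mk b : Hq p) ∈ K →
      (b 0 + b 1 - b 2 - b 3) • (Submodule.Quotient.mk ![1,1,-1,-1] : Hq p) ∈ K := by
    intro b hb
    have hz : (Submodule.Quotient.mk b + permHom p (Equiv.swap 0 1 * Equiv.swap 2 3)
        (Submodule.Quotient.mk b) : Hq p) ∈ K := K.add_mem hb (hS _ hb)
    have he : (b 0 + b 1 - b 2 - b 3) • (Submodule.Quotient.mk ![1,1,-1,-1] : Hq p)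
        = (Submodule.Quotient.mk b + permHom p (Equiv.swap 0 1 * Equiv.swap 2 3)
            (Submodule.Quotient.mk b)) +
          (Submodule.Quotient.mk b + permHom p (Equiv.swap 0 1 * Equiv.swap 2 3)
            (Submodule.Quotient.mk b)) := by
      show (Submodule.Quotient.mk ((b 0 + b 1 - b 2 - b 3) • ![1,1,-1,-1]) : Hq p) =
        Submodule.Quotient.mk
          (((b + fun i => b ((Equiv.swap 0 1 * Equiv.swap 2 3 : Equiv.Perm (Fin 4))⁻¹ i)) +
            (b + fun i => b ((Equiv.swap 0 1 * Equiv.swap 2 3 : Equiv.Perm (Fin 4))⁻¹ i))))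
      rw [Submodule.Quotient.eq, Submodule.mem_span_singleton]
      refine ⟨-(b 0 + b 1 + b 2 + b 3), ?_⟩
      funext i
      fin_cases i <;>
        simp only [Pi.add_apply, Pi.sub_apply, Pi.smul_apply, smul_eq_mul, hσ] <;>
        norm_num [Matrix.cons_val_two, Matrix.cons_val_three, show ((⟨2, by omega⟩ : Fin 4)) = 2 from rfl,
          show ((⟨3, by omega⟩ : Fin 4)) = 3 from rfl] <;> ring
    rw [he]
    exact K.add_mem hz hz
  have k1 := key a hxK
  have haτ : (Submodule.Quotient.mk (fun i => a ((Equiv.swap 1 2 * Equiv.swap 2 3 : Equiv.Perm (Fin 4))⁻¹ i)) : Hq p) ∈ K :=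
    hT _ hxK
  have k2 := key _ haτ
  have haττ : (Submodule.Quotient.mk (fun i =>
      (fun j => a ((Equiv.swap 1 2 * Equiv.swap 2 3 : Equiv.Perm (Fin 4))⁻¹ j))
        ((Equiv.swap 1 2 * Equiv.swap 2 3 : Equiv.Perm (Fin 4))⁻¹ i)) : Hq p) ∈ K :=
    hT _ haτ
  have k3 := key _ haττ
  simp only [hτ] at k2 k3
  simp only [Matrix.cons_val_zero, Matrix.cons_val_one, Matrix.head_cons,
    Matrix.cons_val_two, Matrix.tail_cons, Matrix.cons_val_three] at k2 k3
  -- not all three coefficients are zero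
  have hc : ¬ (a 0 + a 1 - a 2 - a 3 = 0 ∧ a 0 + a 3 - a 1 - a 2 = 0 ∧ a 0 + a 2 - a 3 - a 1 = 0) := by
    rintro ⟨hc1, hc2, hc3⟩
    have e2 : a 2 = a 0 := by
      have : 2 * (a 0 - a 2) = 0 := by linear_combination hc1 + hc2
      rcases mul_eq_zero.mp this with h | h
      · exact absurd h h2ne
      · linear_combination -h
    have e3 : a 3 = a 0 := by
      have : 2 * (a 0 - a 3) = 0 := by linear_combination hc1 + hc3
      rcases mul_eq_zero.mp this with h | h
      · exact absurd h h2ne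
      · linear_combination -h
    have e1 : a 1 = a 0 := by
      have : 2 * (a 0 - a 1) = 0 := by linear_combination hc2 + hc3
      rcases mul_eq_zero.mp this with h | h
      · exact absurd h h2ne
      · linear_combination -h
    apply hx0
    rw [Submodule.Quotient.mk_eq_zero, Submodule.mem_span_singleton]
    refine ⟨a 0, ?_⟩
    funext i
    fin_cases i <;> simp [e1, e2, e3]
  -- V₁ ∈ K
  have hV1 : (Submodule.Quotient.mk ![1,1,-1,-1] : Hq p) ∈ K := by
    by_cases hc1 : a 0 + a 1 - a 2 - a 3 = 0
    · by_cases hc2 : a 0 + a 3 - a 1 - a 2 = 0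
      · have hc3 : a 0 + a 2 - a 3 - a 1 ≠ 0 := fun h => hc ⟨hc1, hc2, h⟩
        have := hsmul (a 0 + a 2 - a 3 - a 1)⁻¹ _ k3
        rwa [smul_smul, inv_mul_cancel₀ hc3, one_smul] at this
      · have := hsmul (a 0 + a 3 - a 1 - a 2)⁻¹ _ k2
        rwa [smul_smul, inv_mul_cancel₀ hc2, one_smul] at this
    · have := hsmul (a 0 + a 1 - a 2 - a 3)⁻¹ _ k1
      rwa [smul_smul, inv_mul_cancel₀ hc1, one_smul] at this
  -- V₂ and V₃ ∈ K via τ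
  have hv12 : (fun i => (![1,1,-1,-1] : Fin 4 → ZMod p)
      ((Equiv.swap 1 2 * Equiv.swap 2 3 : Equiv.Perm (Fin 4))⁻¹ i)) = ![1,-1,1,-1] := by
    funext i; fin_cases i <;> simp only [hτ] <;> norm_num [Matrix.cons_val_two, Matrix.cons_val_three]
  have hV2 : (Submodule.Quotient.mk ![1,-1,1,-1] : Hq p) ∈ K := by
    have := hT _ hV1
    rw [show permHom p (Equiv.swap 1 2 * Equiv.swap 2 3) (Submodule.Quotient.mk ![1,1,-1,-1] : Hq p)
      = Submodule.Quotient.mk (fun i => (![1,1,-1,-1] : Fin 4 → ZMod p)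
        ((Equiv.swap 1 2 * Equiv.swap 2 3 : Equiv.Perm (Fin 4))⁻¹ i)) from rfl, hv12] at this
    exact this
  have hv23 : (fun i => (![1,-1,1,-1] : Fin 4 → ZMod p)
      ((Equiv.swap 1 2 * Equiv.swap 2 3 : Equiv.Perm (Fin 4))⁻¹ i)) = ![1,-1,-1,1] := by
    funext i; fin_cases i <;> simp only [hτ] <;> norm_num [Matrix.cons_val_two, Matrix.cons_val_three]
  have hV3 : (Submodule.Quotient.mk ![1,-1,-1,1] : Hq p) ∈ K := by
    have := hT _ hV2
    rw [show permHom p (Equiv.swap 1 2 * Equiv.swap 2 3) (Submodule.Quotient.mk ![1,-1,1,-1] : Hq p)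
      = Submodule.Quotient.mk (fun i => (![1,-1,1,-1] : Fin 4 → ZMod p)
        ((Equiv.swap 1 2 * Equiv.swap 2 3 : Equiv.Perm (Fin 4))⁻¹ i)) from rfl, hv23] at this
    exact this
  -- the element V₂ + V₃ - V₁ = -4 • ē₁
  refine ⟨1, (Submodule.Quotient.mk ![1,-1,1,-1] + Submodule.Quotient.mk ![1,-1,-1,1]
      - Submodule.Quotient.mk ![1,1,-1,-1] : Hq p), K.sub_mem (K.add_mem hV2 hV3) hV1, ?_, ?_⟩
  · intro h
    rw [← Submodule.Quotient.mk_add, ← Submodule.Quotient.mk_sub,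
      Submodule.Quotient.mk_eq_zero, Submodule.mem_span_singleton] at h
    obtain ⟨r, hr⟩ := h
    have e0 := congrFun hr 0
    have e1 := congrFun hr 1
    simp [Pi.add_apply, Pi.sub_apply, Pi.smul_apply, smul_eq_mul] at e0 e1
    apply h4ne
    linear_combination e1 - e0
  · rw [AddSubgroup.mem_zmultiples_iff]
    refine ⟨-4, ?_⟩
    rw [← Int.cast_smul_eq_zsmul (ZMod p)]
    show ((-4 : ℤ) : ZMod p) • (Submodule.Quotient.mk (Pi.single 1 (1:ZMod p)) : Hq p) = _
    rw [← Submodule.Quotient.mk_smul, ← Submodule.Quotient.mk_add, ← Submodule.Quotient.mk_sub,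
      Submodule.Quotient.eq, Submodule.mem_span_singleton]
    refine ⟨-1, ?_⟩
    funext i
    fin_cases i <;>
      simp [Pi.single_apply, Pi.add_apply, Pi.sub_apply, Pi.smul_apply, smul_eq_mul] <;>
      push_cast <;> ring
end

section
/- Let p ≥ 3 be a prime and let H = (ℤ/p)⁴ / ⟨(1,1,1,1)⟩ with ē₁, ē₂, ē₃, ē₄ the images of the standard basis vectors. The number of subgroups K of H of order p such that K contains no nonzero multiple of any ē_j (j = 1,2,3,4) is exactly p² + p − 3. -/
open AddSubgroup

section Generic

variable {G : Type*} [AddCommGroup G] {G' : Type*} [AddCommGroup G']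

/-- In a subgroup of prime order, any nonzero element generates. -/
lemma zmult_eq_of_mem {P : ℕ} (hP : P.Prime) {K : AddSubgroup G} (hK : Nat.card K = P)
    {x : G} (hx : x ∈ K) (hx0 : x ≠ 0) : zmultiples x = K := by
  have hfin : Finite K := Nat.finite_of_card_ne_zero (by rw [hK]; exact hP.ne_zero)
  have hdvd : addOrderOf x ∣ P := hK ▸ AddSubgroup.addOrderOf_dvd_natCard K hx
  have hord : addOrderOf x = P := by
    rcases (Nat.Prime.eq_one_or_self_of_dvd hP _ hdvd) with h | h
    · exact absurd (AddMonoid.addOrderOf_eq_one_iff.mp h) hx0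
    · exact h
  exact AddSubgroup.eq_of_le_of_card_ge (zmultiples_le.mpr hx)
    (by rw [hK, Nat.card_zmultiples, hord])

/-- Counting subgroups of prime order by counting generators. -/
lemma card_subgroups_mul {P : ℕ} (hP : P.Prime) [Finite G]
    (hord : ∀ x : G, x ≠ 0 → addOrderOf x = P) :
    Nat.card {K : AddSubgroup G // Nat.card K = P} * (P - 1)
      = Nat.card {x : G // x ≠ 0} := by
  classical
  have E : {x : G // x ≠ 0} ≃
      Σ K : {K : AddSubgroup G // Nat.card K = P}, {x : G // x ∈ K.1 ∧ x ≠ 0} :=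
    { toFun := fun x => ⟨⟨zmultiples x.1, by rw [Nat.card_zmultiples, hord _ x.2]⟩,
        x.1, mem_zmultiples _, x.2⟩
      invFun := fun s => ⟨s.2.1, s.2.2.2⟩
      left_inv := fun x => rfl
      right_inv := by
        rintro ⟨⟨K, hKc⟩, x, hx, h0⟩
        have hzm : zmultiples x = K := zmult_eq_of_mem hP hKc hx h0
        subst hzm
        rfl }
  have hfib : ∀ K : {K : AddSubgroup G // Nat.card K = P},
      Nat.card {x : G // x ∈ K.1 ∧ x ≠ 0} = P - 1 := by
    intro K
    have e2 : {x : G // x ∈ K.1 ∧ x ≠ 0} ≃ {y : K.1 // ¬ y = 0} :=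
      { toFun := fun s => ⟨⟨s.1, s.2.1⟩, by
          simp only [ne_eq, Subtype.ext_iff]; exact s.2.2⟩
        invFun := fun y => ⟨y.1.1, y.1.2, by
          intro h; exact y.2 (Subtype.ext h)⟩
        left_inv := fun s => rfl
        right_inv := fun y => rfl }
    rw [Nat.card_congr e2]
    haveI : Fintype K.1 := Fintype.ofFinite _
    rw [Nat.card_eq_fintype_card, Fintype.card_subtype_compl,
      Fintype.card_subtype_eq (0 : K.1), ← Nat.card_eq_fintype_card, K.2]
  rw [Nat.card_congr E]
  haveI : Fintype {K : AddSubgroup G // Nat.card K = P} := Fintype.ofFinite _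
  haveI I2 : ∀ K : {K : AddSubgroup G // Nat.card K = P},
      Fintype {x : G // x ∈ K.1 ∧ x ≠ 0} := fun K => Fintype.ofFinite _
  rw [show (Nat.card (Σ K : {K : AddSubgroup G // Nat.card K = P},
      {x : G // x ∈ K.1 ∧ x ≠ 0})) = Fintype.card _ from Nat.card_eq_fintype_card,
    Fintype.card_sigma]
  rw [Nat.card_eq_fintype_card]
  rw [Finset.sum_congr rfl (fun K _ => by
    rw [← Nat.card_eq_fintype_card, hfib K])]
  rw [Finset.sum_const, smul_eq_mul, Finset.card_univ, mul_comm]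

/-- Transfer of `zmultiples` membership across an additive equivalence. -/
lemma mem_zmult_equiv (E : G ≃+ G') (a x : G) :
    E x ∈ zmultiples (E a) ↔ x ∈ zmultiples a := by
  simp only [mem_zmultiples_iff]
  constructor
  · rintro ⟨n, hn⟩
    exact ⟨n, E.injective (by rw [map_zsmul]; exact hn)⟩
  · rintro ⟨n, hn⟩
    exact ⟨n, by rw [← map_zsmul, hn]⟩

lemma card_map_equiv (E : G ≃+ G') (K : AddSubgroup G) :
    Nat.card (K.map E.toAddMonoidHom) = Nat.card K :=
  (Nat.card_congr (AddSubgroup.equivMapOfInjective K E.toAddMonoidHom E.injective).toEquiv).symm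

end Generic

section Vspace

variable (p : ℕ)

abbrev Vp : Type := Fin 3 → ZMod p

/-- Images of the `ē j` in `(ℤ/p)³`. -/
def vv : Fin 4 → Vp p :=
  ![Pi.single 0 1, Pi.single 1 1, Pi.single 2 1, fun _ => -1]

variable [Fact p.Prime]

lemma vv_ne_zero (j : Fin 4) : vv p j ≠ 0 := by
  fin_cases j
  · intro h; have := congrFun h 0; simp [vv, Pi.single_apply] at this
  · intro h; have := congrFun h 1; simp [vv, Pi.single_apply] at this
  · intro h; have := congrFun h 2; simp [vv, Pi.single_apply] at this
  · intro h; have := congrFun h 0; simp [vv] at this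

lemma addOrderOf_Vp (x : Vp p) (hx : x ≠ 0) : addOrderOf x = p := by
  have hp : p.Prime := Fact.out
  have hdvd : addOrderOf x ∣ p := by
    rw [addOrderOf_dvd_iff_nsmul_eq_zero]
    funext i
    simp [nsmul_eq_mul, ZMod.natCast_self]
  rcases hp.eq_one_or_self_of_dvd _ hdvd with h | h
  · exact absurd (AddMonoid.addOrderOf_eq_one_iff.mp h) hx
  · exact h

lemma card_L (j : Fin 4) : Nat.card (zmultiples (vv p j)) = p := by
  rw [Nat.card_zmultiples, addOrderOf_Vp p _ (vv_ne_zero p j)]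

lemma vv_not_mem (i j : Fin 4) (hij : i ≠ j) : vv p i ∉ zmultiples (vv p j) := by
  intro h
  rw [mem_zmultiples_iff] at h
  obtain ⟨n, hn⟩ := h
  have h0 := congrFun hn 0
  have h1 := congrFun hn 1
  have h2 := congrFun hn 2
  fin_cases i <;> fin_cases j <;>
    simp [vv, zsmul_eq_mul, Pi.single_apply] at hij h0 h1 h2 <;> simp_all

lemma L_inj (i j : Fin 4) (h : zmultiples (vv p i) = zmultiples (vv p j)) : i = j := by
  by_contra hne
  exact vv_not_mem p i j hne (h ▸ mem_zmultiples (vv p i))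

lemma card_Vp : Nat.card (Vp p) = p ^ 3 := by
  rw [Nat.card_fun, Nat.card_zmod, Nat.card_eq_fintype_card, Fintype.card_fin]

lemma card_nonzero : Nat.card {x : Vp p // x ≠ 0} = p ^ 3 - 1 := by
  classical
  haveI : Fintype (Vp p) := Fintype.ofFinite _
  rw [Nat.card_eq_fintype_card, Fintype.card_subtype_compl,
    Fintype.card_subtype_eq (0 : Vp p), ← Nat.card_eq_fintype_card, card_Vp]

/-- The number of order-`p` subgroups of `(ℤ/p)³` is `p² + p + 1`. -/
lemma card_order_p_subgroups (hp3 : 3 ≤ p) :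
    Nat.card {K : AddSubgroup (Vp p) // Nat.card K = p} = p ^ 2 + p + 1 := by
  have hp : p.Prime := Fact.out
  have h := card_subgroups_mul hp (addOrderOf_Vp p)
  rw [card_nonzero] at h
  obtain ⟨q, rfl⟩ : ∃ q, p = q + 1 := ⟨p - 1, by omega⟩
  have key : ((q+1) ^ 2 + (q+1) + 1) * ((q+1) - 1) = (q+1) ^ 3 - 1 := by
    have h1 : (q+1) ^ 3 = q^3 + 3*q^2 + 3*q + 1 := by ring
    have h2 : ((q+1) ^ 2 + (q+1) + 1) * q = q^3 + 3*q^2 + 3*q := by ring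
    simp only [Nat.add_sub_cancel, h1, h2]
  rw [← key] at h
  exact Nat.eq_of_mul_eq_mul_right (by omega) h

theorem countV (hp3 : 3 ≤ p) :
    Nat.card {K : AddSubgroup (Vp p) // Nat.card K = p ∧
      ∀ j : Fin 4, ∀ x ∈ K, x ∈ zmultiples (vv p j) → x = 0} = p ^ 2 + p - 3 := by
  classical
  have hp : p.Prime := Fact.out
  have hiff : ∀ K : AddSubgroup (Vp p),
      (Nat.card K = p ∧ ∀ j : Fin 4, ∀ x ∈ K, x ∈ zmultiples (vv p j) → x = 0)
        ↔ (Nat.card K = p ∧ ¬ ∃ j : Fin 4, K = zmultiples (vv p j)) := by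
    intro K
    constructor
    · rintro ⟨hc, hcond⟩
      refine ⟨hc, ?_⟩
      rintro ⟨j, rfl⟩
      exact vv_ne_zero p j (hcond j _ (mem_zmultiples _) (mem_zmultiples _))
    · rintro ⟨hc, hne⟩
      refine ⟨hc, ?_⟩
      intro j x hxK hxz
      by_contra hx0
      apply hne
      refine ⟨j, ?_⟩
      rw [← zmult_eq_of_mem hp hc hxK hx0]
      refine AddSubgroup.eq_of_le_of_card_ge (zmultiples_le.mpr hxz) ?_
      rw [card_L, Nat.card_zmultiples, addOrderOf_Vp p x hx0]
  rw [Nat.card_congr (Equiv.subtypeEquivRight hiff)]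
  rw [Nat.card_congr (Equiv.subtypeSubtypeEquivSubtypeInter
    (fun K : AddSubgroup (Vp p) => Nat.card K = p)
    (fun K => ¬ ∃ j : Fin 4, K = zmultiples (vv p j))).symm]
  haveI : Fintype {K : AddSubgroup (Vp p) // Nat.card K = p} := Fintype.ofFinite _
  haveI : Fintype {a : {K : AddSubgroup (Vp p) // Nat.card K = p} //
      ∃ j : Fin 4, a.1 = zmultiples (vv p j)} := Fintype.ofFinite _
  haveI : Fintype {a : {K : AddSubgroup (Vp p) // Nat.card K = p} //
      ¬ ∃ j : Fin 4, a.1 = zmultiples (vv p j)} := Fintype.ofFinite _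
  rw [Nat.card_eq_fintype_card, Fintype.card_subtype_compl]
  have hbad : Fintype.card {a : {K : AddSubgroup (Vp p) // Nat.card K = p} //
      ∃ j : Fin 4, a.1 = zmultiples (vv p j)} = 4 := by
    let g : Fin 4 → {a : {K : AddSubgroup (Vp p) // Nat.card K = p} //
        ∃ j : Fin 4, a.1 = zmultiples (vv p j)} :=
      fun j => ⟨⟨zmultiples (vv p j), card_L p j⟩, j, rfl⟩
    have hg : Function.Bijective g := by
      constructor
      · intro i j hij
        have : (g i).1.1 = (g j).1.1 := by rw [hij]
        exact L_inj p i j this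
      · rintro ⟨⟨K, hc⟩, j, hj⟩
        refine ⟨j, ?_⟩
        apply Subtype.ext
        apply Subtype.ext
        exact hj.symm
    have := Fintype.card_of_bijective hg
    rw [Fintype.card_fin] at this
    exact this.symm
  rw [hbad, ← Nat.card_eq_fintype_card, card_order_p_subgroups p hp3]
  have : 3 ≤ p ^ 2 := by nlinarith
  omega

end Vspace

section Transport

variable (p : ℕ)

/-- The projection `(ℤ/p)⁴ → (ℤ/p)³`, `x ↦ (x₀ - x₃, x₁ - x₃, x₂ - x₃)`. -/
def phi : (Fin 4 → ZMod p) →ₗ[ZMod p] Vp p :=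
  LinearMap.pi (fun i : Fin 3 =>
    (LinearMap.proj (Fin.castSucc i) : (Fin 4 → ZMod p) →ₗ[ZMod p] ZMod p)
      - (LinearMap.proj (3 : Fin 4) : (Fin 4 → ZMod p) →ₗ[ZMod p] ZMod p))

lemma phi_apply (x : Fin 4 → ZMod p) (i : Fin 3) :
    phi p x i = x (Fin.castSucc i) - x 3 := rfl

lemma phi_ker : LinearMap.ker (phi p) =
    Submodule.span (ZMod p) {(fun _ => (1 : ZMod p) : Fin 4 → ZMod p)} := by
  ext x
  rw [LinearMap.mem_ker, Submodule.mem_span_singleton]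
  constructor
  · intro h
    refine ⟨x 3, ?_⟩
    funext j
    have h3 : ∀ i : Fin 3, x (Fin.castSucc i) = x 3 := by
      intro i
      have := congrFun h i
      rw [phi_apply] at this
      simpa [sub_eq_zero] using this
    fin_cases j
    · simpa using (h3 0).symm
    · simpa using (h3 1).symm
    · simpa using (h3 2).symm
    · simp
  · rintro ⟨a, rfl⟩
    funext i
    simp [phi_apply]

lemma phi_surj : Function.Surjective (phi p) := by
  intro y
  refine ⟨![y 0, y 1, y 2, 0], ?_⟩
  funext i
  fin_cases i <;>
    simp [phi_apply,
      show Fin.castSucc (0 : Fin 3) = (0 : Fin 4) from rfl,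
      show Fin.castSucc (1 : Fin 3) = (1 : Fin 4) from rfl,
      show Fin.castSucc (2 : Fin 3) = (2 : Fin 4) from rfl]

/-- The isomorphism `Hq p ≃ₗ (ℤ/p)³`. -/
noncomputable def eqv : Hq p ≃ₗ[ZMod p] Vp p :=
  (Submodule.quotEquivOfEq _ _ (phi_ker p).symm).trans
    ((phi p).quotKerEquivOfSurjective (phi_surj p))

lemma eqv_mk (x : Fin 4 → ZMod p) :
    eqv p (Submodule.Quotient.mk x) = phi p x := by
  simp only [eqv, LinearEquiv.trans_apply, Submodule.quotEquivOfEq_mk,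
    LinearMap.quotKerEquivOfSurjective]
  erw [LinearEquiv.trans_apply]
  rw [LinearEquiv.ofTop_apply]
  exact LinearMap.quotKerEquivRange_apply_mk _ _

lemma eqv_eBar (j : Fin 4) : eqv p (eBar p j) = vv p j := by
  rw [eBar, eqv_mk]
  funext i
  fin_cases j <;> fin_cases i <;>
    simp [phi_apply, vv, Pi.single_apply,
      show Fin.castSucc (0 : Fin 3) = (0 : Fin 4) from rfl,
      show Fin.castSucc (1 : Fin 3) = (1 : Fin 4) from rfl,
      show Fin.castSucc (2 : Fin 3) = (2 : Fin 4) from rfl] <;>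
    decide

end Transport

/-- the number of subgroups `K` of `H` of order `p` containing no
nonzero multiple of any `ē j` is exactly `p² + p − 3`. -/
theorem stmt10 (p : ℕ) (hp : p.Prime) (hp3 : 3 ≤ p) :
    Nat.card {K : AddSubgroup (Hq p) //
        Nat.card K = p ∧
          ∀ j : Fin 4, ∀ x ∈ K, x ∈ AddSubgroup.zmultiples (eBar p j) → x = 0} =
      p ^ 2 + p - 3 := by
  haveI : Fact p.Prime := ⟨hp⟩
  set E : Hq p ≃+ Vp p := (eqv p).toAddEquiv with hE
  have hEeBar : ∀ j, E (eBar p j) = vv p j := fun j => eqv_eBar p j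
  let mapEquiv : AddSubgroup (Hq p) ≃ AddSubgroup (Vp p) :=
    { toFun := fun K => K.map E.toAddMonoidHom
      invFun := fun K => K.comap E.toAddMonoidHom
      left_inv := fun K => AddSubgroup.comap_map_eq_self_of_injective E.injective K
      right_inv := fun K => AddSubgroup.map_comap_eq_self_of_surjective E.surjective K }
  have hmap : ∀ K, mapEquiv K = K.map E.toAddMonoidHom := fun _ => rfl
  have key : Nat.card {K : AddSubgroup (Hq p) //
      Nat.card K = p ∧
        ∀ j : Fin 4, ∀ x ∈ K, x ∈ AddSubgroup.zmultiples (eBar p j) → x = 0}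
    = Nat.card {K : AddSubgroup (Vp p) // Nat.card K = p ∧
        ∀ j : Fin 4, ∀ x ∈ K, x ∈ AddSubgroup.zmultiples (vv p j) → x = 0} := by
    refine Nat.card_congr (Equiv.subtypeEquiv mapEquiv ?_)
    intro K
    rw [hmap K]
    constructor
    · rintro ⟨hc, hcond⟩
      refine ⟨by rw [card_map_equiv, hc], ?_⟩
      intro j y hy hyz
      rw [AddSubgroup.mem_map] at hy
      obtain ⟨x, hxK, rfl⟩ := hy
      simp only [AddEquiv.coe_toAddMonoidHom] at hyz ⊢
      rw [← hEeBar j, mem_zmult_equiv] at hyz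
      rw [hcond j x hxK hyz, map_zero]
    · rintro ⟨hc, hcond⟩
      refine ⟨by rw [← card_map_equiv E K]; exact hc, ?_⟩
      intro j x hxK hxz
      have h0 : E x = 0 := by
        apply hcond j (E x) (AddSubgroup.mem_map.mpr ⟨x, hxK, rfl⟩)
        rw [← hEeBar j]
        exact (mem_zmult_equiv E _ _).mpr hxz
      have : E x = E 0 := by rw [map_zero]; exact h0
      exact E.injective this
  rw [key]
  exact countV p hp3
end

section
/- Let p ≥ 3 be a prime and let H = (ℤ/p)⁴ / ⟨(1,1,1,1)⟩ with ē₁, ē₂, ē₃, ē₄ the images of the standard basis vectors. For all r, s ∈ ℤ/p, the element r·ē₁ + ē₂ + s·ē₄ belongs to the cyclic subgroup generated by ē₁ + r·ē₂ + s·ē₃ if and only if either (s = 0 and r² = 1) or (s ≠ 0 and r = s − 1). -/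
lemma span_one_mem (p : ℕ) (x : Fin 4 → ZMod p) :
    x ∈ Submodule.span (ZMod p) {(fun _ => (1 : ZMod p) : Fin 4 → ZMod p)} ↔
      x 1 = x 0 ∧ x 2 = x 0 ∧ x 3 = x 0 := by
  rw [Submodule.mem_span_singleton]
  constructor
  · rintro ⟨c, rfl⟩; simp
  · rintro ⟨h1, h2, h3⟩
    exact ⟨x 0, by funext j; fin_cases j <;> simp [h1, h2, h3]⟩

lemma mem_zmult_mk (p : ℕ) [NeZero p] (v w : Fin 4 → ZMod p) :
    (Submodule.Quotient.mk v : Hq p) ∈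
        AddSubgroup.zmultiples (Submodule.Quotient.mk w : Hq p) ↔
      ∃ m : ZMod p, m • w - v ∈
        Submodule.span (ZMod p) {(fun _ => (1 : ZMod p) : Fin 4 → ZMod p)} := by
  rw [AddSubgroup.mem_zmultiples_iff]
  constructor
  · rintro ⟨n, hn⟩
    refine ⟨(n : ZMod p), ?_⟩
    rw [← Submodule.Quotient.eq]
    rw [Submodule.Quotient.mk_smul, Int.cast_smul_eq_zsmul]
    exact hn
  · rintro ⟨m, hm⟩
    obtain ⟨n, rfl⟩ := ZMod.intCast_surjective m
    refine ⟨n, ?_⟩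
    rw [← Int.cast_smul_eq_zsmul (ZMod p), ← Submodule.Quotient.mk_smul,
      Submodule.Quotient.eq]
    exact hm

/-- `r·ē₁ + ē₂ + s·ē₄ ∈ ⟨ē₁ + r·ē₂ + s·ē₃⟩` iff
`(s = 0 ∧ r² = 1)` or `(s ≠ 0 ∧ r = s − 1)`.  (0-based indices.) -/
theorem stmt12 (p : ℕ) (hp : p.Prime) (hp3 : 3 ≤ p) (r s : ZMod p) :
    r • eBar p 0 + eBar p 1 + s • eBar p 3 ∈
        AddSubgroup.zmultiples (eBar p 0 + r • eBar p 1 + s • eBar p 2) ↔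
      (s = 0 ∧ r ^ 2 = 1) ∨ (s ≠ 0 ∧ r = s - 1) := by
  haveI : Fact p.Prime := ⟨hp⟩
  have hV : r • eBar p 0 + eBar p 1 + s • eBar p 3
      = (Submodule.Quotient.mk ![r, 1, 0, s] : Hq p) := by
    simp only [eBar, ← Submodule.Quotient.mk_smul, ← Submodule.Quotient.mk_add]
    congr 1
    funext j; fin_cases j <;> simp [Pi.single_apply]
  have hW : eBar p 0 + r • eBar p 1 + s • eBar p 2
      = (Submodule.Quotient.mk ![1, r, s, 0] : Hq p) := by
    simp only [eBar, ← Submodule.Quotient.mk_smul, ← Submodule.Quotient.mk_add]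
    congr 1
    funext j; fin_cases j <;> simp [Pi.single_apply]
  rw [hV, hW, mem_zmult_mk]
  have hcoord : ∀ m : ZMod p,
      (m • ![1, r, s, 0] - ![r, 1, 0, s] ∈
        Submodule.span (ZMod p) {(fun _ => (1 : ZMod p) : Fin 4 → ZMod p)}) ↔
      (m * r - 1 = m - r ∧ m * s = m - r ∧ -s = m - r) := by
    intro m
    rw [span_one_mem]
    have e0 : (m • ![1, r, s, 0] - ![r, 1, 0, s] : Fin 4 → ZMod p) 0 = m - r := by simp
    have e1 : (m • ![1, r, s, 0] - ![r, 1, 0, s] : Fin 4 → ZMod p) 1 = m * r - 1 := by simp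
    have e2 : (m • ![1, r, s, 0] - ![r, 1, 0, s] : Fin 4 → ZMod p) 2 = m * s := by simp
    have e3 : (m • ![1, r, s, 0] - ![r, 1, 0, s] : Fin 4 → ZMod p) 3 = -s := by simp
    rw [e0, e1, e2, e3]
  simp only [hcoord]
  constructor
  · rintro ⟨m, h1, h2, h3⟩
    by_cases hs : s = 0
    · subst hs
      have hm : m = r := by linear_combination -h2
      subst hm
      exact Or.inl ⟨rfl, by linear_combination h1⟩
    · refine Or.inr ⟨hs, ?_⟩
      have h0 : (m + 1) * s = 0 := by linear_combination h2 - h3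
      have hm : m = -1 := by
        rcases mul_eq_zero.mp h0 with h | h
        · linear_combination h
        · exact absurd h hs
      rw [hm] at h3
      linear_combination h3
  · rintro (⟨hs, hr⟩ | ⟨hs, hr⟩)
    · subst hs
      exact ⟨r, by linear_combination hr, by ring, by ring⟩
    · exact ⟨-1, by ring, by linear_combination hr, by linear_combination hr⟩
end

section
/- Let p ≥ 3 be a prime and let H = (ℤ/p)⁴ / ⟨(1,1,1,1)⟩ with ē₁, ē₂, ē₃, ē₄ the images of the standard basis vectors. For all r, s ∈ ℤ/p, the element s·ē₁ + ē₃ + r·ē₄ belongs to the cyclic subgroup generated by ē₁ + r·ē₂ + s·ē₃ if and only if either (r = 0 and s² = 1) or (r ≠ 0 and r = s + 1). -/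
/-- `s·ē₁ + ē₃ + r·ē₄ ∈ ⟨ē₁ + r·ē₂ + s·ē₃⟩` iff
`(r = 0 ∧ s² = 1)` or `(r ≠ 0 ∧ r = s + 1)`.  (0-based indices.) -/
theorem stmt13 (p : ℕ) (hp : p.Prime) (hp3 : 3 ≤ p) (r s : ZMod p) :
    s • eBar p 0 + eBar p 2 + r • eBar p 3 ∈
        AddSubgroup.zmultiples (eBar p 0 + r • eBar p 1 + s • eBar p 2) ↔
      (r = 0 ∧ s ^ 2 = 1) ∨ (r ≠ 0 ∧ r = s + 1) := by
  have hA : s • eBar p 0 + eBar p 2 + r • eBar p 3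
      = (Submodule.Quotient.mk ![s, 0, 1, r] : Hq p) := by
    simp only [eBar, ← Submodule.Quotient.mk_smul, ← Submodule.Quotient.mk_add]
    congr 1
    funext j; fin_cases j <;> simp [Pi.single_apply]
  have hB : eBar p 0 + r • eBar p 1 + s • eBar p 2
      = (Submodule.Quotient.mk ![1, r, s, 0] : Hq p) := by
    simp only [eBar, ← Submodule.Quotient.mk_smul, ← Submodule.Quotient.mk_add]
    congr 1
    funext j; fin_cases j <;> simp [Pi.single_apply]
  rw [hA, hB, AddSubgroup.mem_zmultiples_iff]
  have hzsmul : ∀ (k : ℤ), k • (Submodule.Quotient.mk ![1, r, s, 0] : Hq p)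
      = Submodule.Quotient.mk ((k : ZMod p) • ![1, r, s, 0]) := by
    intro k
    rw [Int.cast_smul_eq_zsmul, ← Submodule.Quotient.mk_smul]
  have key : (∃ k : ℤ, k • (Submodule.Quotient.mk ![1, r, s, 0] : Hq p)
        = Submodule.Quotient.mk ![s, 0, 1, r]) ↔
      ∃ t c : ZMod p, t - s = c ∧ t * r = c ∧ t * s - 1 = c ∧ -r = c := by
    constructor
    · rintro ⟨k, hk⟩
      rw [hzsmul, Submodule.Quotient.eq, Submodule.mem_span_singleton] at hk
      obtain ⟨c, hc⟩ := hk
      refine ⟨(k : ZMod p), c, ?_, ?_, ?_, ?_⟩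
      · have := congrFun hc 0; simpa using this.symm
      · have := congrFun hc 1; simpa using this.symm
      · have := congrFun hc 2; simpa using this.symm
      · have := congrFun hc 3; simpa using this.symm
    · rintro ⟨t, c, h0, h1, h2, h3⟩
      obtain ⟨k, hk⟩ := ZMod.intCast_surjective (n := p) t
      refine ⟨k, ?_⟩
      rw [hzsmul, Submodule.Quotient.eq, Submodule.mem_span_singleton]
      refine ⟨c, ?_⟩
      funext j
      fin_cases j <;> simp [hk] <;>
        [exact h0.symm; exact h1.symm; exact h2.symm; exact h3.symm]
  rw [key]
  haveI := Fact.mk hp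
  constructor
  · rintro ⟨t, c, h0, h1, h2, h3⟩
    by_cases hr : r = 0
    · subst hr
      left
      have hc : c = 0 := by linear_combination -h3
      have ht : t = s := by linear_combination h0 + hc
      exact ⟨rfl, by linear_combination h2 + hc - s * ht⟩
    · right
      have h : (t + 1) * r = 0 := by linear_combination h1 - h3
      rcases mul_eq_zero.mp h with ht | h'
      · exact ⟨hr, by linear_combination h0 - h3 - ht⟩
      · exact absurd h' hr
  · rintro (⟨hr, hs⟩ | ⟨hr, hrs⟩)
    · subst hr
      exact ⟨s, 0, by ring, by ring, by linear_combination hs, by ring⟩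
    · exact ⟨-1, -r, by linear_combination hrs, by ring, by linear_combination hrs, by ring⟩
end

section
/- Let p ≥ 3 be a prime and let H = (ℤ/p)⁴ / ⟨(1,1,1,1)⟩ with ē₁, ē₂, ē₃, ē₄ the images of the standard basis vectors. For all r, s ∈ ℤ/p, the element s·ē₂ + r·ē₃ + ē₄ belongs to the cyclic subgroup generated by ē₁ + r·ē₂ + s·ē₃ if and only if r + s = 1 in ℤ/p. -/
lemma mk_eq_mk {p : ℕ} (a b : Fin 4 → ZMod p) :
    (Submodule.Quotient.mk a : Hq p) = Submodule.Quotient.mk b ↔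
      ∃ c : ZMod p, a - b = c • (fun _ => (1 : ZMod p)) := by
  rw [Submodule.Quotient.eq, Submodule.mem_span_singleton]
  constructor
  · rintro ⟨c, hc⟩; exact ⟨c, hc.symm⟩
  · rintro ⟨c, hc⟩; exact ⟨c, hc.symm⟩

/-- `s·ē₂ + r·ē₃ + ē₄ ∈ ⟨ē₁ + r·ē₂ + s·ē₃⟩` iff `r + s = 1`
in `ℤ/p`.  (0-based indices.) -/
theorem stmt14 (p : ℕ) (hp : p.Prime) (hp3 : 3 ≤ p) (r s : ZMod p) :
    s • eBar p 1 + r • eBar p 2 + eBar p 3 ∈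
        AddSubgroup.zmultiples (eBar p 0 + r • eBar p 1 + s • eBar p 2) ↔
      r + s = 1 := by
  have hg : eBar p 0 + r • eBar p 1 + s • eBar p 2 =
      Submodule.Quotient.mk (![1, r, s, 0] : Fin 4 → ZMod p) := by
    have : (![1, r, s, 0] : Fin 4 → ZMod p) =
        (Pi.single 0 1 : Fin 4 → ZMod p) + r • (Pi.single 1 1 : Fin 4 → ZMod p) + s • (Pi.single 2 1 : Fin 4 → ZMod p) := by
      funext i; fin_cases i <;> simp [Pi.single_apply]
    rw [this]
    simp [eBar, Submodule.Quotient.mk_add, Submodule.Quotient.mk_smul]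
  have hw : s • eBar p 1 + r • eBar p 2 + eBar p 3 =
      Submodule.Quotient.mk (![0, s, r, 1] : Fin 4 → ZMod p) := by
    have : (![0, s, r, 1] : Fin 4 → ZMod p) =
        s • (Pi.single 1 1 : Fin 4 → ZMod p) + r • (Pi.single 2 1 : Fin 4 → ZMod p) + (Pi.single 3 1 : Fin 4 → ZMod p) := by
      funext i; fin_cases i <;> simp [Pi.single_apply]
    rw [this]
    simp [eBar, Submodule.Quotient.mk_add, Submodule.Quotient.mk_smul]
  rw [hg, hw, AddSubgroup.mem_zmultiples_iff]
  constructor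
  · rintro ⟨n, hn⟩
    have : (Submodule.Quotient.mk (n • ![1, r, s, 0]) : Hq p) =
        Submodule.Quotient.mk (![0, s, r, 1] : Fin 4 → ZMod p) := by
      rw [← hn]
      rfl
    rw [mk_eq_mk] at this
    obtain ⟨c, hc⟩ := this
    have h0 := congrFun hc 0
    have h1 := congrFun hc 1
    have h3 := congrFun hc 3
    simp [Pi.smul_apply] at h0 h1 h3
    -- h3 : -1 = c, h0 : (n : ZMod p) = c, h1 : n*r - s = c
    have hn' : (n : ZMod p) = c := by simpa using h0
    rw [← h3] at hc
    have h1' := congrFun hc 1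
    simp [hn', ← h3] at h1
    linear_combination -h1
  · intro h
    refine ⟨-1, ?_⟩
    have : ((-1 : ℤ) • Submodule.Quotient.mk (![1, r, s, 0] : Fin 4 → ZMod p) : Hq p) =
        Submodule.Quotient.mk ((-1 : ℤ) • ![1, r, s, 0]) := rfl
    rw [this, mk_eq_mk]
    refine ⟨-1, ?_⟩
    funext i
    fin_cases i <;> simp <;> linear_combination -h
end

section
/- Let p ≥ 3 be a prime and let H = (ℤ/p)⁴ / ⟨(1,1,1,1)⟩ with ē₁, ē₂, ē₃, ē₄ the images of the standard basis vectors. For all r, s ∈ ℤ/p with s ≠ 0, the element ē₁ + r·ē₃ + s·ē₄ belongs to the cyclic subgroup generated by ē₁ + r·ē₂ + s·ē₃ if and only if s² − 3s + 3 = 0 and r = 2s − s² in ℤ/p. -/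
/-- for `s ≠ 0`, `ē₁ + r·ē₃ + s·ē₄ ∈ ⟨ē₁ + r·ē₂ + s·ē₃⟩` iff
`s² − 3s + 3 = 0` and `r = 2s − s²` in `ℤ/p`.  (0-based indices.) -/
theorem stmt15 (p : ℕ) (hp : p.Prime) (hp3 : 3 ≤ p) (r s : ZMod p) (hs : s ≠ 0) :
    eBar p 0 + r • eBar p 2 + s • eBar p 3 ∈
        AddSubgroup.zmultiples (eBar p 0 + r • eBar p 1 + s • eBar p 2) ↔
      (s ^ 2 - 3 * s + 3 = 0 ∧ r = 2 * s - s ^ 2) := by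
  haveI := Fact.mk hp
  haveI : NeZero p := ⟨hp.ne_zero⟩
  set v : Fin 4 → ZMod p := ![1, r, s, 0] with hv
  set w : Fin 4 → ZMod p := ![1, 0, r, s] with hw
  have hg : eBar p 0 + r • eBar p 1 + s • eBar p 2 =
      (Submodule.Quotient.mk v : Hq p) := by
    show Submodule.Quotient.mk _ + r • Submodule.Quotient.mk _ +
        s • Submodule.Quotient.mk _ = _
    rw [← Submodule.Quotient.mk_smul, ← Submodule.Quotient.mk_smul,
      ← Submodule.Quotient.mk_add, ← Submodule.Quotient.mk_add]
    congr 1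
    funext i; fin_cases i <;> simp [Pi.single_apply, hv]
  have hx : eBar p 0 + r • eBar p 2 + s • eBar p 3 =
      (Submodule.Quotient.mk w : Hq p) := by
    show Submodule.Quotient.mk _ + r • Submodule.Quotient.mk _ +
        s • Submodule.Quotient.mk _ = _
    rw [← Submodule.Quotient.mk_smul, ← Submodule.Quotient.mk_smul,
      ← Submodule.Quotient.mk_add, ← Submodule.Quotient.mk_add]
    congr 1
    funext i; fin_cases i <;> simp [Pi.single_apply, hw]
  rw [hg, hx, AddSubgroup.mem_zmultiples_iff]
  constructor
  · rintro ⟨n, hn⟩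
    rw [← Int.cast_smul_eq_zsmul (ZMod p), ← Submodule.Quotient.mk_smul,
      Submodule.Quotient.eq, Submodule.mem_span_singleton] at hn
    obtain ⟨c, hc⟩ := hn
    set m : ZMod p := (n : ZMod p) with hm
    have h0 := congrFun hc 0
    have h1 := congrFun hc 1
    have h2 := congrFun hc 2
    have h3 := congrFun hc 3
    simp [hv, hw] at h0 h1 h2 h3
    -- h0 : c = m * 1 - 1, h1 : c = m * r, h2 : c = m * s - r, h3 : c = -s
    have hm' : m = 1 - s := by linear_combination h3 - h0
    have hr : r = 2 * s - s ^ 2 := by linear_combination h2 - h3 + s * hm'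
    have key : s * (s ^ 2 - 3 * s + 3) = 0 := by
      linear_combination h3 - h1 - r * hm' - (1 - s) * hr
    rcases mul_eq_zero.mp key with h | h
    · exact absurd h hs
    · exact ⟨h, hr⟩
  · rintro ⟨h1, h2⟩
    refine ⟨((1 - s).val : ℤ), ?_⟩
    rw [← Int.cast_smul_eq_zsmul (ZMod p), ← Submodule.Quotient.mk_smul,
      Submodule.Quotient.eq, Submodule.mem_span_singleton]
    refine ⟨-s, ?_⟩
    have hval : ((((1 - s).val : ℤ) : ZMod p)) = 1 - s := by
      push_cast
      simp [ZMod.natCast_val, ZMod.cast_id]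
    rw [hval]
    funext i
    fin_cases i
    · simp [hv, hw]
    · simp [hv, hw]; linear_combination (s - 1) * h2 - s * h1
    · simp [hv, hw]; linear_combination h2
    · simp [hv, hw]
end

section
/- Let p ≥ 3 be a prime and let H = (ℤ/p)⁴ / ⟨(1,1,1,1)⟩ with ē₁, ē₂, ē₃, ē₄ the images of the standard basis vectors. For all r, s ∈ ℤ/p, the element ē₂ + r·ē₃ + s·ē₄ belongs to the cyclic subgroup generated by ē₁ + r·ē₂ + s·ē₃ if and only if s³ − s² + s − 1 = 0 and r = s − s² in ℤ/p. -/
theorem key (p : ℕ) (hp : p.Prime) (r s : ZMod p) :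
    eBar p 1 + r • eBar p 2 + s • eBar p 3 ∈
        AddSubgroup.zmultiples (eBar p 0 + r • eBar p 1 + s • eBar p 2) ↔
      (s ^ 3 - s ^ 2 + s - 1 = 0 ∧ r = s - s ^ 2) := by
  haveI : Fact p.Prime := ⟨hp⟩
  set N := Submodule.span (ZMod p) {(fun _ => (1 : ZMod p) : Fin 4 → ZMod p)} with hN
  have h1 : eBar p 0 + r • eBar p 1 + s • eBar p 2
      = (Submodule.Quotient.mk (![1, r, s, 0]) : Hq p) := by
    rw [eBar, eBar, eBar, ← Submodule.Quotient.mk_smul, ← Submodule.Quotient.mk_smul,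
      ← Submodule.Quotient.mk_add, ← Submodule.Quotient.mk_add]
    congr 1
    funext j; fin_cases j <;> simp [Pi.single_apply]
  have h2 : eBar p 1 + r • eBar p 2 + s • eBar p 3
      = (Submodule.Quotient.mk (![0, 1, r, s]) : Hq p) := by
    rw [eBar, eBar, eBar, ← Submodule.Quotient.mk_smul, ← Submodule.Quotient.mk_smul,
      ← Submodule.Quotient.mk_add, ← Submodule.Quotient.mk_add]
    congr 1
    funext j; fin_cases j <;> simp [Pi.single_apply]
  rw [h1, h2, AddSubgroup.mem_zmultiples_iff]
  have hzs : ∀ (k : ℤ), k • (Submodule.Quotient.mk (![1, r, s, 0]) : Hq p)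
      = Submodule.Quotient.mk (k • ![1, r, s, 0]) := by
    intro k
    rw [← Int.cast_smul_eq_zsmul (ZMod p) k (![1, r, s, 0]), Submodule.Quotient.mk_smul,
      Int.cast_smul_eq_zsmul]
  constructor
  · rintro ⟨k, hk⟩
    rw [hzs, Submodule.Quotient.eq, Submodule.mem_span_singleton] at hk
    obtain ⟨c, hc⟩ := hk
    have e0 := congrFun hc 0
    have e1 := congrFun hc 1
    have e2 := congrFun hc 2
    have e3 := congrFun hc 3
    simp [zsmul_eq_mul] at e0 e1 e2 e3
    -- e0 : c = k - 0, e3 : c = -s, etc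
    have hc3 : c = -s := by linear_combination e3
    have hk0 : (k : ZMod p) = -s := by linear_combination e3 - e0
    rw [hc3, hk0] at e1 e2
    have hr : r = s - s ^ 2 := by linear_combination e2
    refine ⟨?_, hr⟩
    rw [hr] at e1
    linear_combination -e1
  · rintro ⟨h3, hr⟩
    refine ⟨((-s).val : ℤ), ?_⟩
    rw [hzs, Submodule.Quotient.eq, Submodule.mem_span_singleton]
    refine ⟨-s, ?_⟩
    have hcast : (((-s).val : ℤ) : ZMod p) = -s := by
      simp [ZMod.natCast_val]
    funext j; fin_cases j
    · simp [zsmul_eq_mul, hcast]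
    · simp [zsmul_eq_mul, hcast]
      linear_combination (-1 : ZMod p) * h3 + s * hr
    · simp [zsmul_eq_mul, hcast]
      linear_combination hr
    · simp [zsmul_eq_mul, hcast]

/-- `ē₂ + r·ē₃ + s·ē₄ ∈ ⟨ē₁ + r·ē₂ + s·ē₃⟩` iff
`s³ − s² + s − 1 = 0` and `r = s − s²` in `ℤ/p`.  (0-based indices.) -/
theorem stmt16 (p : ℕ) (hp : p.Prime) (hp3 : 3 ≤ p) (r s : ZMod p) :
    eBar p 1 + r • eBar p 2 + s • eBar p 3 ∈
        AddSubgroup.zmultiples (eBar p 0 + r • eBar p 1 + s • eBar p 2) ↔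
      (s ^ 3 - s ^ 2 + s - 1 = 0 ∧ r = s - s ^ 2) := by
  exact key p hp r s
end
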